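/- Let (q_k)_{k≥1} and α_{k,i} be as in the four-species coefficient setup. Then for every k ≥ 1: α_{k+1,0} = 0; α_{k+1,1} = 2·Σ_{j=1}^{3k+1} α_{k,j}/(j+1); α_{k+1,2} = (3/2)·α_{k,1} − Σ_{j=1}^{3k+1} α_{k,j}/(j+1); α_{k+1,3} = −2·α_{k,1} + (4/3)·α_{k,2}; and for every i ≥ 4, α_{k+1,i} = ((i+1)/i)·α_{k,i−1} − ((i+1)/(i−1))·α_{k,i−2} + (1/3)·((i+1)/(i−2))·α_{k,i−3}. -/

import Mathlib

/-!
Integrating out `ξ₃`, then `ξ₂`, then `ξ₁`, each time splitting `[0, 1]` at the point where the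
indicator switches, evaluates the right-hand side of the recursion as a polynomial in `x` built
from `q k` by ring operations and antiderivatives. Hence `q (k + 1) = S (q k)` for an explicit
polynomial map `S` defined over every field (two rational polynomials agreeing on `[0, 1]` are
equal), and the recursion is read off the coefficients of `S p`. The constant `∫₀¹ q k` entering
`α_{k+1,1}` and `α_{k+1,2}` is the finite sum of the statement because `q k` has no constant term
and degree at most `3 k`.
-/

open MeasureTheory Polynomial Set

namespace Polynomial

variable {R : Type*} [Field R]

noncomputable def antideriv : R[X] →ₗ[R] R[X] :=
  lsum fun n => ((n : R) + 1)⁻¹ • monomial (n + 1)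

@[simp]
theorem coeff_antideriv_zero (p : R[X]) : (antideriv p).coeff 0 = 0 := by
  simp [antideriv, lsum_apply, Polynomial.sum, coeff_monomial]

@[simp]
theorem coeff_antideriv_succ (p : R[X]) (n : ℕ) :
    (antideriv p).coeff (n + 1) = p.coeff n / (n + 1) := by
  by_cases h : p.coeff n = 0 <;>
    simp [antideriv, lsum_apply, Polynomial.sum, finsetSum_coeff, coeff_monomial, h, div_eq_inv_mul]

@[simp]
theorem antideriv_eval_zero (p : R[X]) : (antideriv p).eval 0 = 0 := by
  simp [← coeff_zero_eq_eval_zero]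

theorem eval_one_antideriv (p : R[X]) : (antideriv p).eval 1 = p.sum fun n a => a / (n + 1) := by
  simp [antideriv, lsum_apply, Polynomial.sum, eval_finsetSum, div_eq_inv_mul]

theorem eval_one_antideriv_eq_sum_Icc {p : R[X]} {d : ℕ} (h0 : p.coeff 0 = 0)
    (hd : p.natDegree ≤ d) :
    (antideriv p).eval 1 = ∑ j ∈ Finset.Icc 1 d, p.coeff j / ((j : R) + 1) := by
  refine (eval_one_antideriv p).trans (sum_eq_of_subset _ (fun _ => zero_div _) fun n hn => ?_)
  have hn0 : n ≠ 0 := by rintro rfl; exact mem_support_iff.1 hn h0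
  have hnd := le_natDegree_of_mem_supp n hn
  simp only [Finset.mem_Icc]
  omega

theorem antideriv_C_mul (a : R) (p : R[X]) : antideriv (C a * p) = C a * antideriv p := by
  simp only [← smul_eq_C_mul, map_smul]

@[simp]
theorem antideriv_one : antideriv (1 : R[X]) = X := by
  ext (_ | _ | n) <;> simp [coeff_one, coeff_X]

theorem antideriv_C (a : R) : antideriv (C a) = C a * X := by
  simpa using antideriv_C_mul a 1

theorem antideriv_X_pow (n : ℕ) : antideriv (X ^ n : R[X]) = C ((n + 1 : R)⁻¹) * X ^ (n + 1) := by
  ext (_ | m)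
  · simp
  · by_cases h : m = n <;> simp [coeff_X_pow, h, div_eq_inv_mul]

theorem map_antideriv {S : Type*} [Field S] (f : R →+* S) (p : R[X]) :
    (antideriv p).map f = antideriv (p.map f) := by
  ext (_ | n) <;> simp

theorem antideriv_X : antideriv (X : R[X]) = C 2⁻¹ * X ^ 2 := by
  simpa [one_add_one_eq_two] using antideriv_X_pow (R := R) 1

theorem antideriv_one_sub_X : antideriv (1 - X : R[X]) = X - C 2⁻¹ * X ^ 2 := by
  rw [map_sub, antideriv_one, antideriv_X]

@[simp]
theorem derivative_antideriv [CharZero R] (p : R[X]) : derivative (antideriv p) = p := by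
  ext n
  rw [coeff_derivative, coeff_antideriv_succ, div_mul_cancel₀ _ (Nat.cast_add_one_ne_zero n)]

theorem integral_eval (p : ℝ[X]) (a b : ℝ) :
    ∫ t in a..b, p.eval t = (antideriv p).eval b - (antideriv p).eval a :=
  intervalIntegral.integral_eq_sub_of_hasDerivAt
    (fun x _ => by simpa using (antideriv p).hasDerivAt x) (p.continuous.intervalIntegrable a b)

end Polynomial

theorem intervalIntegral.integral_eq_add_of_eqOn_Ioo {E : Type*} [NormedAddCommGroup E]
    [NormedSpace ℝ E] {μ : Measure ℝ} [NullSingletonClass μ] {f g h : ℝ → E} {a b c : ℝ}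
    (hac : a ≤ c) (hcb : c ≤ b) (hf : IntervalIntegrable f μ a c)
    (hg : IntervalIntegrable g μ c b) (hhf : EqOn h f (Ioo a c)) (hhg : EqOn h g (Ioo c b)) :
    ∫ t in a..b, h t ∂μ = (∫ t in a..c, f t ∂μ) + ∫ t in c..b, g t ∂μ := by
  rw [← intervalIntegral.integral_congr_Ioo_of_le hac hhf,
    ← intervalIntegral.integral_congr_Ioo_of_le hcb hhg]
  exact (intervalIntegral.integral_add_adjacent_intervals
    (hf.congr_uIoo (uIoo_of_le hac ▸ hhf.symm)) (hg.congr_uIoo (uIoo_of_le hcb ▸ hhg.symm))).symm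

theorem Polynomial.integral_eq_of_eqOn_eval {h : ℝ → ℝ} {P Q : ℝ[X]} {a b c : ℝ}
    (hac : a ≤ c) (hcb : c ≤ b) (hP : EqOn h (P.eval ·) (Ioo a c))
    (hQ : EqOn h (Q.eval ·) (Ioo c b)) :
    ∫ t in a..b, h t = (antideriv P).eval c - (antideriv P).eval a
      + ((antideriv Q).eval b - (antideriv Q).eval c) := by
  rw [intervalIntegral.integral_eq_add_of_eqOn_Ioo hac hcb (P.continuous.intervalIntegrable _ _)
    (Q.continuous.intervalIntegrable _ _) hP hQ, integral_eval, integral_eval]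

section Step

variable {R : Type*} [Field R]

/-- With `U m = ∫₀ᵐ (1 - t) dt`, `F m = ∫₀ᵐ p` and `V m = ∫₀ᵐ ∫ₜ¹ (p t + p s) ds dt`, integrating
out `ξ₃` and `ξ₂` leaves `(p x + p ξ₁) U m + V m` with `m = min ξ₁ x`; the pieces `ξ₁ < x` and
`ξ₁ > x` of the last integral give the first three and the last two terms. -/
noncomputable def bakSneppenStep (p : R[X]) : R[X] :=
  let U := antideriv (1 - X)
  let F := antideriv p
  let V := antideriv (p * (1 - X) + C (F.eval 1) - F)
  p * antideriv U + antideriv (p * U) + antideriv V + (1 - X) * (p * U + V)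
    + U * (C (F.eval 1) - F)

theorem map_bakSneppenStep {S : Type*} [Field S] (f : R →+* S) (p : R[X]) :
    (bakSneppenStep p).map f = bakSneppenStep (p.map f) := by
  have h1 : (antideriv (p.map f)).eval 1 = f ((antideriv p).eval 1) := by
    rw [← map_antideriv, eval_one_map]
  simp [bakSneppenStep, map_antideriv, h1]

theorem coeff_bakSneppenStep_zero (p : R[X]) : (bakSneppenStep p).coeff 0 = 0 := by
  simp [coeff_zero_eq_eval_zero, bakSneppenStep]

variable [CharZero R]

theorem coeff_bakSneppenStep_one (p : R[X]) :
    (bakSneppenStep p).coeff 1 = 2 * (antideriv p).eval 1 + 2 * p.coeff 0 := by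
  simp [bakSneppenStep, antideriv_one_sub_X, mul_sub, sub_mul, antideriv_C_mul, antideriv_X_pow,
    antideriv_X, antideriv_C, mul_assoc, mul_left_comm p (C _), X_pow_mul, X_mul, coeff_C_mul,
    coeff_mul_X_pow', coeff_X]
  ring

theorem coeff_bakSneppenStep_two (p : R[X]) :
    (bakSneppenStep p).coeff 2 = 3 / 2 * p.coeff 1 - (antideriv p).eval 1 - 3 * p.coeff 0 := by
  simp [bakSneppenStep, antideriv_one_sub_X, mul_sub, sub_mul, antideriv_C_mul, antideriv_X_pow,
    antideriv_X, antideriv_C, mul_assoc, mul_left_comm p (C _), X_pow_mul, X_mul, coeff_C_mul,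
    coeff_mul_X_pow', coeff_X, coeff_C]
  ring

theorem coeff_bakSneppenStep_three (p : R[X]) :
    (bakSneppenStep p).coeff 3 = -2 * p.coeff 1 + 4 / 3 * p.coeff 2 + 4 / 3 * p.coeff 0 := by
  simp [bakSneppenStep, antideriv_one_sub_X, mul_sub, sub_mul, antideriv_C_mul, antideriv_X_pow,
    antideriv_X, antideriv_C, mul_assoc, mul_left_comm p (C _), X_pow_mul, X_mul, coeff_C_mul,
    coeff_mul_X_pow']
  ring

theorem coeff_bakSneppenStep_add_four (p : R[X]) (n : ℕ) :
    (bakSneppenStep p).coeff (n + 4) =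
      ((n : R) + 5) / (n + 4) * p.coeff (n + 3) - ((n : R) + 5) / (n + 3) * p.coeff (n + 2)
        + 1 / 3 * (((n : R) + 5) / (n + 2)) * p.coeff (n + 1) := by
  have h2 : (n : R) + 2 ≠ 0 := by exact_mod_cast (n + 1).succ_ne_zero
  have h3 : (n : R) + 3 ≠ 0 := by exact_mod_cast (n + 2).succ_ne_zero
  have h4 : (n : R) + 4 ≠ 0 := by exact_mod_cast (n + 3).succ_ne_zero
  simp [bakSneppenStep, antideriv_one_sub_X, mul_sub, sub_mul, antideriv_C_mul, antideriv_X_pow,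
    antideriv_X, antideriv_C, mul_assoc, mul_left_comm p (C _), X_pow_mul, X_mul, coeff_C_mul,
    coeff_mul_X_pow']
  norm_num only [add_assoc]
  field_simp
  ring

theorem natDegree_bakSneppenStep_le (p : R[X]) :
    (bakSneppenStep p).natDegree ≤ p.natDegree + 3 := by
  refine natDegree_le_iff_coeff_eq_zero.2 fun N hN => ?_
  obtain ⟨n, rfl⟩ : ∃ n, N = n + 4 := ⟨N - 4, by omega⟩
  rw [coeff_bakSneppenStep_add_four, coeff_eq_zero_of_natDegree_lt (by omega),
    coeff_eq_zero_of_natDegree_lt (by omega), coeff_eq_zero_of_natDegree_lt (by omega)]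
  ring

end Step

noncomputable def bakSneppenIntegrand (p : ℝ[X]) (x ξ₁ ξ₂ ξ₃ : ℝ) : ℝ :=
  if ξ₂ < min ξ₁ (min ξ₃ x) then p.eval x + p.eval ξ₁ + p.eval ξ₂ + p.eval ξ₃ else 0

section Integrals

variable (p : ℝ[X]) {x : ℝ}

theorem integral_bakSneppenIntegrand_inner (ξ₁ : ℝ) {ξ₂ : ℝ} (hξ₂ : ξ₂ ∈ Icc 0 1) :
    ∫ ξ₃ in 0..1, bakSneppenIntegrand p x ξ₁ ξ₂ ξ₃ =
      if ξ₂ < min ξ₁ x then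
        (C (p.eval x + p.eval ξ₁) * (1 - X)
          + (p * (1 - X) + C ((antideriv p).eval 1) - antideriv p)).eval ξ₂
      else 0 := by
  split_ifs with h
  · rw [integral_eq_of_eqOn_eval (P := 0) (Q := C (p.eval x + p.eval ξ₁ + p.eval ξ₂) + p)
      hξ₂.1 hξ₂.2]
    · simp [antideriv_C]
      ring
    · intro t ht
      simp [bakSneppenIntegrand, ht.2.le]
    · intro t ht
      simp only [bakSneppenIntegrand, lt_min_iff] at h ⊢
      simp [h, ht.1]
  · have hzero (ξ₃ : ℝ) : bakSneppenIntegrand p x ξ₁ ξ₂ ξ₃ = 0 :=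
      if_neg fun h' => h (h'.trans_le (min_le_min_left _ (min_le_right _ _)))
    simp [hzero]

theorem integral_bakSneppenIntegrand_middle (hx : 0 ≤ x) {ξ₁ : ℝ} (hξ₁ : ξ₁ ∈ Icc 0 1) :
    ∫ ξ₂ in 0..1, ∫ ξ₃ in 0..1, bakSneppenIntegrand p x ξ₁ ξ₂ ξ₃ =
      (C (p.eval x + p.eval ξ₁) * antideriv (1 - X)
        + antideriv (p * (1 - X) + C ((antideriv p).eval 1) - antideriv p)).eval (min ξ₁ x) := by
  have hm : min ξ₁ x ≤ 1 := (min_le_left _ _).trans hξ₁.2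
  rw [integral_eq_of_eqOn_eval (Q := 0) (le_min hξ₁.1 hx) hm
    (P := C (p.eval x + p.eval ξ₁) * (1 - X)
      + (p * (1 - X) + C ((antideriv p).eval 1) - antideriv p))]
  · rw [map_add, antideriv_C_mul]
    simp only [eval_add, eval_mul, eval_C, antideriv_eval_zero, map_zero, eval_zero]
    ring
  · intro t ht
    dsimp only
    rw [integral_bakSneppenIntegrand_inner p ξ₁ ⟨ht.1.le, ht.2.le.trans hm⟩, if_pos ht.2]
  · intro t ht
    dsimp only
    rw [integral_bakSneppenIntegrand_inner p ξ₁ ⟨(le_min hξ₁.1 hx).trans ht.1.le, ht.2.le⟩,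
      if_neg (not_lt.2 ht.1.le), eval_zero]

theorem integral_bakSneppenIntegrand (hx : x ∈ Icc 0 1) :
    ∫ ξ₁ in 0..1, ∫ ξ₂ in 0..1, ∫ ξ₃ in 0..1, bakSneppenIntegrand p x ξ₁ ξ₂ ξ₃ =
      (bakSneppenStep p).eval x := by
  rw [integral_eq_of_eqOn_eval hx.1 hx.2
    (P := C (p.eval x) * antideriv (1 - X) + p * antideriv (1 - X)
      + antideriv (p * (1 - X) + C ((antideriv p).eval 1) - antideriv p))
    (Q := C ((C (p.eval x) * antideriv (1 - X)
      + antideriv (p * (1 - X) + C ((antideriv p).eval 1) - antideriv p)).eval x)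
      + C ((antideriv (1 - X)).eval x) * p)]
  · simp only [bakSneppenStep, map_add, antideriv_C_mul, antideriv_C, eval_add, eval_sub,
      eval_mul, eval_C, eval_X, eval_one, antideriv_eval_zero]
    ring
  · intro t ht
    dsimp only
    rw [integral_bakSneppenIntegrand_middle p hx.1 ⟨ht.1.le, ht.2.le.trans hx.2⟩,
      min_eq_left ht.2.le]
    simp only [eval_add, eval_mul, eval_C]
    ring
  · intro t ht
    dsimp only
    rw [integral_bakSneppenIntegrand_middle p hx.1 ⟨hx.1.trans ht.1.le, ht.2.le⟩,
      min_eq_right ht.1.le]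
    simp only [eval_add, eval_mul, eval_C]
    ring

end Integrals

theorem eq_bakSneppenStep_of_forall_aeval_eq {p r : ℚ[X]}
    (h : ∀ x ∈ Icc (0 : ℝ) 1, aeval x r = ∫ ξ₁ in 0..1, ∫ ξ₂ in 0..1, ∫ ξ₃ in 0..1,
      bakSneppenIntegrand (p.map (algebraMap ℚ ℝ)) x ξ₁ ξ₂ ξ₃) :
    r = bakSneppenStep p := by
  refine map_injective _ (algebraMap ℚ ℝ).injective (eq_of_infinite_eval_eq _ _
    ((Icc_infinite zero_lt_one).mono fun x hx => ?_))
  rw [mem_ofPred_eq, map_bakSneppenStep, ← integral_bakSneppenIntegrand _ hx,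
    eval_map_algebraMap, h x hx]

theorem bs4_coefficient_recursion
    (q : ℕ → Polynomial ℚ)
    (hq1 : q 1 = X - X ^ 2 + C (1/3 : ℚ) * X ^ 3)
    (hrec : ∀ k, 1 ≤ k → ∀ x ∈ Set.Icc (0 : ℝ) 1,
      (Polynomial.aeval x) (q (k + 1)) =
        ∫ ξ₁ in (0:ℝ)..1, ∫ ξ₂ in (0:ℝ)..1, ∫ ξ₃ in (0:ℝ)..1,
          if ξ₂ < min ξ₁ (min ξ₃ x) then
            (Polynomial.aeval x) (q k) + (Polynomial.aeval ξ₁) (q k)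
              + (Polynomial.aeval ξ₂) (q k) + (Polynomial.aeval ξ₃) (q k)
          else 0)
    (k : ℕ) (hk : 1 ≤ k) :
    (q (k + 1)).coeff 0 = 0
    ∧ (q (k + 1)).coeff 1 = 2 * ∑ j ∈ Finset.Icc 1 (3 * k + 1), (q k).coeff j / ((j : ℚ) + 1)
    ∧ (q (k + 1)).coeff 2 =
        (3/2) * (q k).coeff 1 - ∑ j ∈ Finset.Icc 1 (3 * k + 1), (q k).coeff j / ((j : ℚ) + 1)
    ∧ (q (k + 1)).coeff 3 = -2 * (q k).coeff 1 + (4/3) * (q k).coeff 2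
    ∧ ∀ i, 4 ≤ i →
        (q (k + 1)).coeff i =
          ((i : ℚ) + 1) / (i : ℚ) * (q k).coeff (i - 1)
            - ((i : ℚ) + 1) / ((i : ℚ) - 1) * (q k).coeff (i - 2)
            + (1/3) * (((i : ℚ) + 1) / ((i : ℚ) - 2)) * (q k).coeff (i - 3) := by
  have hstep (j : ℕ) (hj : 1 ≤ j) : q (j + 1) = bakSneppenStep (q j) :=
    eq_bakSneppenStep_of_forall_aeval_eq fun x hx => by
      simpa [bakSneppenIntegrand] using hrec j hj x hx
  have hinv (j : ℕ) (hj : 1 ≤ j) : (q j).coeff 0 = 0 ∧ (q j).natDegree ≤ 3 * j := by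
    induction j, hj using Nat.le_induction with
    | base => exact ⟨by simp [hq1], by rw [hq1]; compute_degree!⟩
    | succ j hj ih =>
      rw [hstep j hj]
      exact ⟨coeff_bakSneppenStep_zero _, (natDegree_bakSneppenStep_le _).trans (by omega)⟩
  obtain ⟨h0, hdeg⟩ := hinv k hk
  have hint := eval_one_antideriv_eq_sum_Icc h0 (hdeg.trans (Nat.le_succ _))
  rw [hstep k hk]
  refine ⟨coeff_bakSneppenStep_zero _, ?_, ?_, ?_, fun i hi => ?_⟩
  · rw [coeff_bakSneppenStep_one, hint, h0]; ring
  · rw [coeff_bakSneppenStep_two, hint, h0]; ring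
  · rw [coeff_bakSneppenStep_three, h0]; ring
  · obtain ⟨n, rfl⟩ := Nat.exists_eq_add_of_le' hi
    rw [coeff_bakSneppenStep_add_four]
    simp only [Nat.reduceSubDiff]
    push_cast
    ring
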